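/- Let B be a symmetric N×N infection rate matrix with an equitable partition π = {N_1,...,N_r}, suppose δ_i = δ_j whenever i,j lie in the same cell, and let v : [0,∞) → ℝ^N be a solution of NIMFA with v_i(0) = v_j(0) whenever i,j lie in the same cell. Then for all t ≥ 0 the viral state satisfies v(t) = Σ_{l=1}^r c_l(t) y_l with c_l(t) = √|N_l| · v^π_l(t), where y_1,...,y_r are the normalized indicator vectors of π and v^π(t) is the reduced-size viral state solving dv^π/dt = -S^π v^π + diag(u_r - v^π) B^π v^π; in particular v(t) lies in the subspace span{y_1,...,y_r} for every t ≥ 0. -/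

import Mathlib

open Matrix Finset

/-- The normalized indicator vector `y_l` of the cell `N_l = {i | c i = l}`:
`(y_l)_i = 1/√|N_l|` if `i ∈ N_l` and `0` otherwise. -/
noncomputable def indVec {N r : ℕ} (c : Fin N → Fin r) (l : Fin r) : Fin N → ℝ :=
  fun i => if c i = l then
    1 / Real.sqrt ((Finset.univ.filter (fun k => c k = l)).card) else 0

/-! The defect `d_i = v_i - v_{rep (c i)}` of the viral state from being constant on cells
satisfies a linear ODE `d' = A(t) d`: for `i, j` in one cell the row difference `B_i - B_j` has
zero sum over every cell, so it annihilates cell-constant vectors, and `δ_i = δ_j`. As `A(t)` is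
continuous and `d(0) = 0`, Grönwall's inequality forces `d ≡ 0`; a cell-constant vector is then
`Σ_l √|N_l| v_{rep l} y_l`. -/

theorem Matrix.eq_zero_of_hasDerivAt_mulVec_self {n : Type*} [Fintype n]
    {A : ℝ → Matrix n n ℝ} {d : ℝ → n → ℝ} {a : ℝ}
    (hA : ContinuousOn A (Set.Ici a)) (hd : ∀ t ∈ Set.Ici a, HasDerivAt d (A t *ᵥ d t) t)
    (ha : d a = 0) : ∀ t ∈ Set.Ici a, d t = 0 := by
  let _ := Matrix.linftyOpNormedAddCommGroup (m := n) (n := n) (α := ℝ)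
  intro t ht
  obtain ⟨K, hK⟩ := isCompact_Icc.exists_bound_of_continuousOn
    (hA.mono (Set.Icc_subset_Ici_self : Set.Icc a t ⊆ _))
  refine eq_zero_of_abs_deriv_le_mul_abs_self_of_eq_zero_right (K := K)
    (fun s hs => (hd s hs.1).continuousAt.continuousWithinAt)
    (fun s hs => (hd s hs.1).hasDerivWithinAt) ha (fun s hs => ?_) t ⟨ht, le_rfl⟩
  exact (linfty_opNorm_mulVec _ _).trans
    (mul_le_mul_of_nonneg_right (hK s (Set.Ico_subset_Icc_self hs)) (norm_nonneg _))

theorem Finset.sum_mul_comp_eq_zero_of_sum_fiber_eq_zero {ι κ R : Type*} [Fintype ι]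
    [Fintype κ] [DecidableEq κ] [NonUnitalNonAssocSemiring R] {c : ι → κ} {a : ι → R}
    (ha : ∀ l, ∑ k ∈ univ.filter (fun k => c k = l), a k = 0) (g : κ → R) :
    ∑ k, a k * g (c k) = 0 := by
  rw [← Finset.sum_fiberwise_of_maps_to (g := c) (t := univ) (fun _ _ => mem_univ _)]
  refine Finset.sum_eq_zero fun l _ => ?_
  rw [Finset.sum_congr rfl fun k hk => by rw [(Finset.mem_filter.1 hk).2], ← Finset.sum_mul,
    ha, zero_mul]

section CellDefect

variable {ι κ : Type*}

def nimfaField [Fintype ι] (δ : ι → ℝ) (B : Matrix ι ι ℝ) (x : ι → ℝ) (i : ι) : ℝ :=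
  -δ i * x i + (1 - x i) * ∑ j, B i j * x j

def cellDefect (c : ι → κ) (rep : κ → ι) (x : ι → ℝ) (i : ι) : ℝ := x i - x (rep (c i))

theorem sum_mul_sub_sum_mul_eq_of_equitable [Fintype ι] [Fintype κ] [DecidableEq κ]
    {B : Matrix ι ι ℝ} {c : ι → κ} (rep : κ → ι) {i j : ι}
    (hequitable : ∀ l, ∑ k ∈ univ.filter (fun k => c k = l), B i k
        = ∑ k ∈ univ.filter (fun k => c k = l), B j k) (x : ι → ℝ) :
    ∑ k, B i k * x k - ∑ k, B j k * x k = ∑ k, (B i k - B j k) * cellDefect c rep x k := by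
  have hcellConst : ∑ k, (B i k - B j k) * x (rep (c k)) = 0 :=
    sum_mul_comp_eq_zero_of_sum_fiber_eq_zero
      (fun l => by rw [sum_sub_distrib, hequitable, sub_self]) (fun l => x (rep l))
  calc ∑ k, B i k * x k - ∑ k, B j k * x k
      = ∑ k, (B i k - B j k) * x k - ∑ k, (B i k - B j k) * x (rep (c k)) := by
        rw [hcellConst, sub_zero, ← sum_sub_distrib]
        simp only [sub_mul]
    _ = ∑ k, (B i k - B j k) * cellDefect c rep x k := by
        rw [← sum_sub_distrib]
        simp only [cellDefect, mul_sub]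

def cellDefectMatrix [Fintype ι] [DecidableEq ι] (δ : ι → ℝ) (B : Matrix ι ι ℝ) (c : ι → κ)
    (rep : κ → ι) (x : ι → ℝ) : Matrix ι ι ℝ :=
  -diagonal (fun i => δ i + ∑ k, B (rep (c i)) k * x k)
    + diagonal (1 - x) * (B - B.submatrix (rep ∘ c) id)

theorem continuous_cellDefectMatrix [Fintype ι] [DecidableEq ι] (δ : ι → ℝ) (B : Matrix ι ι ℝ)
    (c : ι → κ) (rep : κ → ι) : Continuous (cellDefectMatrix δ B c rep) := by
  unfold cellDefectMatrix
  fun_prop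

theorem cellDefectMatrix_mulVec_apply [Fintype ι] [DecidableEq ι] (δ : ι → ℝ)
    (B : Matrix ι ι ℝ) (c : ι → κ) (rep : κ → ι) (x y : ι → ℝ) (i : ι) :
    (cellDefectMatrix δ B c rep x *ᵥ y) i = -(δ i + ∑ k, B (rep (c i)) k * x k) * y i
      + (1 - x i) * ∑ k, (B i k - B (rep (c i)) k) * y k := by
  simp only [cellDefectMatrix, add_mulVec, neg_mulVec, ← mulVec_mulVec, sub_mulVec, Pi.add_apply,
    Pi.neg_apply, Pi.sub_apply, mulVec_diagonal, Pi.one_apply, neg_mul]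
  simp only [mulVec, dotProduct, submatrix_apply, Function.comp_apply, id, ← sum_sub_distrib,
    sub_mul]

theorem cellDefect_nimfaField [Fintype ι] [DecidableEq ι] [Fintype κ] [DecidableEq κ]
    {δ : ι → ℝ} {B : Matrix ι ι ℝ} {c : ι → κ} {rep : κ → ι} (hrep : ∀ l, c (rep l) = l)
    (hequitable : ∀ i j, c i = c j → ∀ l, ∑ k ∈ univ.filter (fun k => c k = l), B i k
        = ∑ k ∈ univ.filter (fun k => c k = l), B j k)
    (hδ_cell : ∀ i j, c i = c j → δ i = δ j) (x : ι → ℝ) :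
    cellDefect c rep (nimfaField δ B x) = cellDefectMatrix δ B c rep x *ᵥ cellDefect c rep x := by
  ext i
  have hsame : c i = c (rep (c i)) := (hrep (c i)).symm
  rw [cellDefectMatrix_mulVec_apply,
    ← sum_mul_sub_sum_mul_eq_of_equitable rep (hequitable _ _ hsame)]
  simp only [cellDefect, nimfaField]
  rw [← hδ_cell _ _ hsame]
  ring

theorem nimfa_apply_eq_apply_rep [Fintype ι] [Fintype κ] [DecidableEq κ]
    {δ : ι → ℝ} {B : Matrix ι ι ℝ} {c : ι → κ} {rep : κ → ι} (hrep : ∀ l, c (rep l) = l)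
    (hequitable : ∀ i j, c i = c j → ∀ l, ∑ k ∈ univ.filter (fun k => c k = l), B i k
        = ∑ k ∈ univ.filter (fun k => c k = l), B j k)
    (hδ_cell : ∀ i j, c i = c j → δ i = δ j) {v : ℝ → ι → ℝ}
    (hsol : ∀ t : ℝ, 0 ≤ t → ∀ i, HasDerivAt (fun s => v s i) (nimfaField δ B (v t) i) t)
    (hinit : ∀ i j, c i = c j → v 0 i = v 0 j) :
    ∀ t : ℝ, 0 ≤ t → ∀ i, v t i = v t (rep (c i)) := by
  classical
  have hcont : ContinuousOn v (Set.Ici 0) :=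
    continuousOn_pi.2 fun i t ht => (hsol t ht i).continuousAt.continuousWithinAt
  have hderiv : ∀ t ∈ Set.Ici (0 : ℝ), HasDerivAt (fun s => cellDefect c rep (v s))
      (cellDefectMatrix δ B c rep (v t) *ᵥ cellDefect c rep (v t)) t := fun t ht => by
    rw [← cellDefect_nimfaField hrep hequitable hδ_cell]
    exact hasDerivAt_pi.2 fun i => (hsol t ht i).sub (hsol t ht (rep (c i)))
  have hinit_defect : cellDefect c rep (v 0) = 0 :=
    funext fun i => sub_eq_zero.2 (hinit _ _ (hrep _).symm)
  intro t ht i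
  exact sub_eq_zero.1 <| congrFun (eq_zero_of_hasDerivAt_mulVec_self
    ((continuous_cellDefectMatrix δ B c rep).comp_continuousOn hcont) hderiv hinit_defect t ht) i

end CellDefect

theorem eq_sum_indVec_of_eq_apply_rep {N r : ℕ} {c : Fin N → Fin r} {rep : Fin r → Fin N}
    {x : Fin N → ℝ} (hx : ∀ i, x i = x (rep (c i))) (i : Fin N) :
    x i = ∑ l : Fin r,
      (Real.sqrt ((Finset.univ.filter (fun k => c k = l)).card) * x (rep l)) * indVec c l i := by
  have hcard : Real.sqrt ((univ.filter (fun k => c k = c i)).card) ≠ 0 :=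
    (Real.sqrt_pos.2 (Nat.cast_pos.2 (card_pos.2 ⟨i, by simp⟩))).ne'
  rw [Fintype.sum_eq_single (c i) fun l hl => by simp [indVec, Ne.symm hl]]
  simp only [indVec, if_true]
  rw [mul_one_div, mul_div_right_comm, div_self hcard, one_mul]
  exact hx i

theorem nimfa_equitable_partition_pod_general
    {N r : ℕ} (B : Matrix (Fin N) (Fin N) ℝ) (δ : Fin N → ℝ)
    (c : Fin N → Fin r) (rep : Fin r → Fin N)
    (hrep : ∀ l, c (rep l) = l)
    (hequitable : ∀ i j, c i = c j → ∀ l : Fin r,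
      ∑ k ∈ univ.filter (fun k => c k = l), B i k
        = ∑ k ∈ univ.filter (fun k => c k = l), B j k)
    (hδ_cell : ∀ i j, c i = c j → δ i = δ j)
    (v : ℝ → Fin N → ℝ)
    (hsol : ∀ t : ℝ, 0 ≤ t → ∀ i, HasDerivAt (fun s => v s i)
      (-δ i * v t i + (1 - v t i) * ∑ j, B i j * v t j) t)
    (hinit : ∀ i j, c i = c j → v 0 i = v 0 j) :
    ∀ t : ℝ, 0 ≤ t →
      (∀ i, v t i = ∑ l : Fin r,
        (Real.sqrt ((Finset.univ.filter (fun k => c k = l)).card) * v t (rep l))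
          * indVec c l i) ∧
      v t ∈ Submodule.span ℝ (Set.range (indVec c)) := by
  intro t ht
  have hdecomp := eq_sum_indVec_of_eq_apply_rep
    (nimfa_apply_eq_apply_rep hrep hequitable hδ_cell hsol hinit t ht)
  refine ⟨hdecomp, (Submodule.mem_span_range_iff_exists_fun ℝ).2
    ⟨fun l => Real.sqrt ((univ.filter (fun k => c k = l)).card) * v t (rep l),
      funext fun i => ?_⟩⟩
  rw [hdecomp i, Finset.sum_apply]
  rfl

/-- **Corollary 1, proper orthogonal decomposition from an equitable partition.**
Under the hypotheses of Theorem 1 (symmetric `B` with an equitable partition, curing rates and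
initial states constant on cells), the viral state satisfies
`v(t) = Σ_l c_l(t) y_l` with `c_l(t) = √|N_l| · v^π_l(t)` (with `v^π_l(t) = v_{rep l}(t)` the
reduced-size viral state); in particular `v(t) ∈ span{y_1,...,y_r}` for all `t ≥ 0`. -/
theorem nimfa_equitable_partition_pod
    {N r : ℕ} (B : Matrix (Fin N) (Fin N) ℝ) (δ : Fin N → ℝ)
    (c : Fin N → Fin r) (rep : Fin r → Fin N)
    (hrep : ∀ l, c (rep l) = l)
    (hB_symm : B.IsSymm)
    (hB_nonneg : ∀ i j, 0 ≤ B i j)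
    (hδ_pos : ∀ i, 0 < δ i)
    (hequitable : ∀ i j, c i = c j → ∀ l : Fin r,
      ∑ k ∈ univ.filter (fun k => c k = l), B i k
        = ∑ k ∈ univ.filter (fun k => c k = l), B j k)
    (hδ_cell : ∀ i j, c i = c j → δ i = δ j)
    (v : ℝ → Fin N → ℝ)
    (hsol : ∀ t : ℝ, 0 ≤ t → ∀ i, HasDerivAt (fun s => v s i)
      (-δ i * v t i + (1 - v t i) * ∑ j, B i j * v t j) t)
    (hinit : ∀ i j, c i = c j → v 0 i = v 0 j) :
    ∀ t : ℝ, 0 ≤ t →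
      (∀ i, v t i = ∑ l : Fin r,
        (Real.sqrt ((Finset.univ.filter (fun k => c k = l)).card) * v t (rep l))
          * indVec c l i) ∧
      v t ∈ Submodule.span ℝ (Set.range (indVec c)) :=
  nimfa_equitable_partition_pod_general B δ c rep hrep hequitable hδ_cell v hsol hinit
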